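/- arXiv:2510.04366 — 4 statements merged into one kernel-verified Lean document; each statement's English description precedes it below -/
import Mathlib

section
/- Let C ≥ 2 and let q = (q_1, …, q_C, q_cs) be a probability vector on C+1 categories. Then ãmb(q) ≥ amb(q), and moreover 0 ≤ ãmb(q) ≤ 1. -/
open Finset

/-- The ambiguity measure of a probability vector `(q₁, …, q_C, q_cs)` on `C+1`
categories: `1` if `q_cs = 1`, and `1 - (1/(1-q_cs)) ∑ q_k²` otherwise. -/
noncomputable def amb (C : ℕ) (q : Fin C → ℝ) (qcs : ℝ) : ℝ :=
  if qcs = 1 then 1 else 1 - (1 / (1 - qcs)) * ∑ k, (q k) ^ 2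

/-- The modified ambiguity measure: `1` if `q_cs = 1`, and
`q_cs + (C/(C-1))·[(1-q_cs) - (1/(1-q_cs)) ∑ q_k²]` otherwise. -/
noncomputable def ambMod (C : ℕ) (q : Fin C → ℝ) (qcs : ℝ) : ℝ :=
  if qcs = 1 then 1
  else qcs + ((C : ℝ) / ((C : ℝ) - 1)) *
    ((1 - qcs) - (1 / (1 - qcs)) * ∑ k, (q k) ^ 2)

/-!
Write `s = 1 - q_cs = ∑ q_k` and `A = (1/s) ∑ q_k²`. For a nonnegative vector,
`∑ q_k² ≤ s²` and, by Cauchy–Schwarz, `s² ≤ C ∑ q_k²`; hence `s/C ≤ A ≤ s`.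
Away from `q_cs = 1` we have `amb = 1 - A` and `ãmb = q_cs + C/(C-1) (s - A)`, so
`ãmb - amb = (s - A)/(C-1) ≥ 0`, `ãmb ≥ q_cs ≥ 0` and `1 - ãmb = (C A - s)/(C-1) ≥ 0`.
-/

section SumSq

variable {ι : Type*} [Fintype ι] {q : ι → ℝ}

theorem one_div_sum_mul_sum_sq_le_sum (hq : ∀ k, 0 ≤ q k) (hs : 0 < ∑ k, q k) :
    (1 / ∑ k, q k) * ∑ k, q k ^ 2 ≤ ∑ k, q k := by
  rw [one_div, inv_mul_le_iff₀ hs, ← sq]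
  exact sum_sq_le_sq_sum_of_nonneg fun k _ => hq k

theorem sum_le_card_mul_one_div_sum_mul_sum_sq (hs : 0 < ∑ k, q k) :
    ∑ k, q k ≤ Fintype.card ι * ((1 / ∑ k, q k) * ∑ k, q k ^ 2) := by
  rw [mul_left_comm, one_div, le_inv_mul_iff₀ hs, ← sq]
  simpa using sq_sum_le_card_mul_sum_sq (s := univ) (f := q)

end SumSq

section Formulas

variable {C : ℕ} {q : Fin C → ℝ} {qcs : ℝ}

theorem ambMod_sub_amb (hC : (C : ℝ) ≠ 1) (h1 : qcs ≠ 1) :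
    ambMod C q qcs - amb C q qcs
      = ((1 - qcs) - (1 / (1 - qcs)) * ∑ k, q k ^ 2) / ((C : ℝ) - 1) := by
  have hC' : (C : ℝ) - 1 ≠ 0 := sub_ne_zero.mpr hC
  simp only [amb, ambMod, if_neg h1]
  field_simp
  ring

theorem one_sub_ambMod (hC : (C : ℝ) ≠ 1) (h1 : qcs ≠ 1) :
    1 - ambMod C q qcs
      = (C * ((1 / (1 - qcs)) * ∑ k, q k ^ 2) - (1 - qcs)) / ((C : ℝ) - 1) := by
  have hC' : (C : ℝ) - 1 ≠ 0 := sub_ne_zero.mpr hC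
  simp only [ambMod, if_neg h1]
  field_simp
  ring

end Formulas

/-- The modified ambiguity measure dominates the unmodified ambiguity measure,
and it also takes values in the unit interval `[0, 1]`. -/
theorem ambMod_ge_amb_and_mem_unit_interval
    (C : ℕ) (hC : 2 ≤ C) (q : Fin C → ℝ) (qcs : ℝ)
    (hq : ∀ k, 0 ≤ q k) (hqcs : 0 ≤ qcs)
    (hsum : (∑ k, q k) + qcs = 1) :
    amb C q qcs ≤ ambMod C q qcs
    ∧ 0 ≤ ambMod C q qcs ∧ ambMod C q qcs ≤ 1 := by
  by_cases h1 : qcs = 1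
  · simp [amb, ambMod, h1]
  have hs : ∑ k, q k = 1 - qcs := by linarith
  have hs_pos : 0 < ∑ k, q k := lt_of_le_of_ne (sum_nonneg fun k _ => hq k) (by grind)
  have hA_le := one_div_sum_mul_sum_sq_le_sum hq hs_pos
  have hle_CA := sum_le_card_mul_one_div_sum_mul_sum_sq hs_pos
  rw [hs] at hA_le hle_CA
  rw [Fintype.card_fin] at hle_CA
  have hC1 : (1 : ℝ) < C := by exact_mod_cast hC
  have hCpos : (0 : ℝ) < C - 1 := sub_pos.mpr hC1
  refine ⟨?_, ?_, ?_⟩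
  · rw [← sub_nonneg, ambMod_sub_amb hC1.ne' h1]
    exact div_nonneg (sub_nonneg.mpr hA_le) hCpos.le
  · rw [ambMod, if_neg h1]
    exact add_nonneg hqcs
      (mul_nonneg (div_nonneg C.cast_nonneg hCpos.le) (sub_nonneg.mpr hA_le))
  · rw [← sub_nonneg, one_sub_ambMod hC1.ne' h1]
    exact div_nonneg (sub_nonneg.mpr hle_CA) hCpos.le
end

section
/- Let C ≥ 2 and let α_1, …, α_C > 0 with α_0 = Σ_{k=1}^C α_k. Let D_α(p) = (Γ(α_0)/∏_{k=1}^C Γ(α_k)) · ∏_{k=1}^C p_k^{α_k − 1} denote the Dirichlet density. Then the Dirichlet expectation of the normalized Shannon entropy H̃(p) = (1/log C) Σ_{k=1}^C p_k log(1/p_k) equals (1/log C)·[ψ(α_0 + 1) − Σ_{k=1}^C (α_k/α_0) ψ(α_k + 1)], where ψ is the digamma function (the derivative of log Γ). Concretely, the integral over the open set {x ∈ ℝ^{C−1} : x_i > 0, Σ_{i<C} x_i < 1}, with respect to (C−1)-dimensional Lebesgue measure and with p_i = x_i for i < C and p_C = 1 − Σ_{i<C} x_i, of H̃(p)·D_α(p)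 equals this value. -/
open Finset MeasureTheory

/-- The digamma function `ψ`, the derivative of `log ∘ Γ`. -/
noncomputable def digamma (x : ℝ) : ℝ :=
  deriv (fun t : ℝ => Real.log (Real.Gamma t)) x

/-- The probability vector on `n+1` categories parameterized by
`x ∈ ℝⁿ`: `p_i = x_i` for `i < n` and `p_n = 1 - ∑ x_i`. -/
noncomputable def simplexCoords (n : ℕ) (x : Fin n → ℝ) : Fin (n + 1) → ℝ :=
  Fin.snoc x (1 - ∑ i, x i)

/-- The Dirichlet density `D_α(p) = (Γ(α₀)/∏ Γ(α_k)) ∏ p_k^{α_k - 1}` with respect to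
`n`-dimensional Lebesgue measure on the parameterized simplex, where `α₀ = ∑ α_k`. -/
noncomputable def dirichletDensity (n : ℕ) (α : Fin (n + 1) → ℝ) (x : Fin n → ℝ) : ℝ :=
  (Real.Gamma (∑ k, α k) / ∏ k, Real.Gamma (α k)) *
    ∏ k, (simplexCoords n x k) ^ (α k - 1)

/-!
The Dirichlet integral `∫ ∏ p_k ^ (β_k - 1) = B(β) = ∏ Γ(β_k) / Γ(∑ β_k)` is proved on the
simplex `{x > 0, ∑ x_i < u}` of every size `u`, where it equals `u ^ (∑ β_k - 1) B(β)`: fixing the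
first coordinate `t`, the remaining ones range over the simplex of size `u - t`, so induction on
the dimension and Tonelli leave a Beta integral in `t`. Differentiating in `β_j` under the integral sign gives
`∫ log p_j ∏ p_k ^ (β_k - 1) = B(β) (ψ(β_j) - ψ(∑ β_k))`. Finally `p_k D_α = (α_k / α₀) D_{α + e_k}`,
so the expected entropy is `∑_k (α_k / α₀) (ψ(α₀ + 1) - ψ(α_k + 1))`.
-/

open Set ProbabilityTheory
open scoped ENNReal

noncomputable def multiBeta {ι : Type*} [Fintype ι] (β : ι → ℝ) : ℝ :=
  (∏ k, Real.Gamma (β k)) / Real.Gamma (∑ k, β k)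

theorem hasDerivAt_Gamma_of_pos {s : ℝ} (hs : 0 < s) :
    HasDerivAt Real.Gamma (Real.Gamma s * digamma s) s := by
  have hΓ : DifferentiableAt ℝ Real.Gamma s :=
    Real.differentiableAt_Gamma fun m => by linarith [m.cast_nonneg (α := ℝ)]
  have hψ : digamma s = deriv Real.Gamma s / Real.Gamma s :=
    (hΓ.hasDerivAt.log (Real.Gamma_pos_of_pos hs).ne').deriv
  rw [hψ, mul_div_cancel₀ _ (Real.Gamma_pos_of_pos hs).ne']
  exact hΓ.hasDerivAt

theorem update_pos {ι : Type*} [DecidableEq ι] {β : ι → ℝ} (hβ : ∀ k, 0 < β k) (j : ι) {s : ℝ}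
    (hs : 0 < s) (k : ι) : 0 < Function.update β j s k := by
  rcases eq_or_ne k j with rfl | hk
  · rwa [Function.update_self]
  · rw [Function.update_of_ne hk]
    exact hβ k

section MultiBeta

variable {ι : Type*} [Fintype ι]

theorem multiBeta_pos [Nonempty ι] {β : ι → ℝ} (hβ : ∀ k, 0 < β k) : 0 < multiBeta β :=
  div_pos (prod_pos fun k _ => Real.Gamma_pos_of_pos (hβ k))
    (Real.Gamma_pos_of_pos (sum_pos (fun k _ => hβ k) univ_nonempty))

variable [DecidableEq ι]

@[to_additive]
theorem prod_apply_update {α M : Type*} [CommMonoid M] (f : ι → α → M) (β : ι → α) (j : ι)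
    (s : α) : ∏ k, f k (Function.update β j s k) = f j s * ∏ k ∈ univ.erase j, f k (β k) := by
  rw [← mul_prod_erase univ _ (mem_univ j), Function.update_self]
  congr 1
  exact prod_congr rfl fun k hk => by rw [Function.update_of_ne (ne_of_mem_erase hk)]

theorem sum_update_add (β : ι → ℝ) (j : ι) (c : ℝ) :
    ∑ k, Function.update β j (β j + c) k = ∑ k, β k + c := by
  rw [sum_update_of_mem (mem_univ j), ← add_sum_erase univ β (mem_univ j),
    sdiff_singleton_eq_erase]
  ring

theorem multiBeta_update_add_one {β : ι → ℝ} (hβ : ∀ k, 0 < β k) (j : ι) :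
    multiBeta (Function.update β j (β j + 1)) = β j / (∑ k, β k) * multiBeta β := by
  have hsum : 0 < ∑ k, β k := sum_pos (fun k _ => hβ k) ⟨j, mem_univ j⟩
  rw [multiBeta, multiBeta, sum_update_add, prod_apply_update (fun _ => Real.Gamma),
    Real.Gamma_add_one (hβ j).ne', Real.Gamma_add_one hsum.ne',
    ← mul_prod_erase univ _ (mem_univ j)]
  have := (Real.Gamma_pos_of_pos hsum).ne'
  field_simp

theorem hasDerivAt_multiBeta_update {β : ι → ℝ} (hβ : ∀ k, 0 < β k) (j : ι) :
    HasDerivAt (fun s => multiBeta (Function.update β j s))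
      (multiBeta β * (digamma (β j) - digamma (∑ k, β k))) (β j) := by
  set A := ∑ k ∈ univ.erase j, β k
  set c := ∏ k ∈ univ.erase j, Real.Gamma (β k)
  have hform : ∀ s,
      multiBeta (Function.update β j s) = c * (Real.Gamma s / Real.Gamma (s + A)) := by
    intro s
    rw [multiBeta, prod_apply_update (fun _ => Real.Gamma), sum_update_of_mem (mem_univ j),
      sdiff_singleton_eq_erase]
    ring
  have hsum : ∑ k, β k = β j + A := (add_sum_erase univ β (mem_univ j)).symm
  have hA : 0 ≤ A := sum_nonneg fun k _ => (hβ k).le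
  have hΓA := (Real.Gamma_pos_of_pos (by linarith [hβ j] : 0 < β j + A)).ne'
  have hquot := ((hasDerivAt_Gamma_of_pos (hβ j)).div
    ((hasDerivAt_Gamma_of_pos (by linarith [hβ j])).comp_add_const (β j) A) hΓA).const_mul c
  have hβj := hform (β j)
  rw [Function.update_eq_self] at hβj
  rw [funext hform]
  refine hquot.congr_deriv ?_
  rw [hβj, hsum]
  field_simp

end MultiBeta

theorem multiBeta_cons {n : ℕ} (a : ℝ) (γ : Fin n → ℝ) (hγ : Real.Gamma (∑ k, γ k) ≠ 0) :
    multiBeta (Fin.cons a γ : Fin (n + 1) → ℝ) =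
      beta a (∑ k, γ k) * multiBeta γ := by
  simp only [multiBeta, beta, Fin.prod_univ_succ, Fin.sum_univ_succ,
    Fin.cons_zero, Fin.cons_succ]
  field_simp

theorem lintegral_rpow_mul_one_sub_rpow {a b : ℝ} (ha : 0 < a) (hb : 0 < b) :
    ∫⁻ t in Ioo 0 1, ENNReal.ofReal (t ^ (a - 1) * (1 - t) ^ (b - 1)) =
      ENNReal.ofReal (beta a b) := by
  have hB := beta_pos ha hb
  have hnorm := lintegral_betaPDF_eq_one ha hb
  rw [lintegral_betaPDF] at hnorm
  simp_rw [mul_assoc, ENNReal.ofReal_mul (one_div_pos.2 hB).le] at hnorm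
  rw [lintegral_const_mul' _ _ ENNReal.ofReal_ne_top, one_div] at hnorm
  rw [ENNReal.eq_inv_of_mul_eq_one_left ((mul_comm _ _).trans hnorm),
    ← ENNReal.ofReal_inv_of_pos (inv_pos.2 hB), inv_inv]

theorem lintegral_rpow_mul_sub_rpow {a b u : ℝ} (ha : 0 < a) (hb : 0 < b) (hu : 0 < u) :
    ∫⁻ t in Ioo 0 u, ENNReal.ofReal (t ^ (a - 1) * (u - t) ^ (b - 1)) =
      ENNReal.ofReal (u ^ (a + b - 1) * beta a b) := by
  have himage : (u * ·) '' Ioo 0 1 = Ioo 0 u := by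
    rw [image_mul_left_Ioo hu, mul_zero, mul_one]
  rw [← himage, lintegral_image_eq_lintegral_abs_deriv_mul (f' := fun _ => u) measurableSet_Ioo
    (fun t _ => by simpa using ((hasDerivAt_id t).const_mul u).hasDerivWithinAt)
    (mul_right_injective₀ hu.ne').injOn]
  have hscale : ∀ t ∈ Ioo (0 : ℝ) 1,
      ENNReal.ofReal |u| * ENNReal.ofReal ((u * t) ^ (a - 1) * (u - u * t) ^ (b - 1)) =
        ENNReal.ofReal (u ^ (a + b - 1)) * ENNReal.ofReal (t ^ (a - 1) * (1 - t) ^ (b - 1)) := by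
    intro t ht
    have h1t : 0 ≤ 1 - t := by linarith [ht.2]
    rw [← ENNReal.ofReal_mul (abs_nonneg _), ← ENNReal.ofReal_mul (by positivity)]
    congr 1
    rw [abs_of_pos hu, show u - u * t = u * (1 - t) by ring,
      Real.mul_rpow hu.le ht.1.le, Real.mul_rpow hu.le h1t,
      show a + b - 1 = 1 + (a - 1) + (b - 1) by ring, Real.rpow_add hu, Real.rpow_add hu,
      Real.rpow_one]
    ring
  rw [setLIntegral_congr_fun measurableSet_Ioo hscale,
    lintegral_const_mul' _ _ ENNReal.ofReal_ne_top, lintegral_rpow_mul_one_sub_rpow ha hb,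
    ← ENNReal.ofReal_mul (by positivity)]

theorem hasDerivAt_integral_rpow_mul {X : Type*} [MeasurableSpace X] {μ : Measure X}
    {p R : X → ℝ} (hp : AEMeasurable p μ) (hp01 : ∀ᵐ x ∂μ, p x ∈ Set.Ioc 0 1) {a s₀ : ℝ}
    (has₀ : a < s₀) (hint : ∀ s, a < s → Integrable (fun x => p x ^ (s - 1) * R x) μ) :
    Integrable (fun x => Real.log (p x) * (p x ^ (s₀ - 1) * R x)) μ ∧
      HasDerivAt (fun s => ∫ x, p x ^ (s - 1) * R x ∂μ)
        (∫ x, Real.log (p x) * (p x ^ (s₀ - 1) * R x) ∂μ) s₀ := by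
  obtain ⟨ε, hε, hv⟩ : ∃ ε > 0, a < s₀ - 2 * ε :=
    ⟨(s₀ - a) / 4, div_pos (sub_pos.2 has₀) four_pos, by linarith⟩
  set v := s₀ - 2 * ε
  refine hasDerivAt_integral_of_dominated_loc_of_deriv_le
    (F := fun s x => p x ^ (s - 1) * R x) (F' := fun s x => Real.log (p x) * (p x ^ (s - 1) * R x))
    (bound := fun x => ε⁻¹ * ‖p x ^ (v - 1) * R x‖) (Metric.ball_mem_nhds s₀ hε)
    (Filter.eventually_of_mem (Ioi_mem_nhds has₀) fun s hs => (hint s hs).aestronglyMeasurable)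
    (hint s₀ has₀)
    ((Real.measurable_log.comp_aemeasurable hp).aestronglyMeasurable.mul
      (hint s₀ has₀).aestronglyMeasurable)
    (hp01.mono fun x hx s hs => ?_) ((hint v hv).norm.const_mul _)
    (hp01.mono fun x hx s _ => ?_)
  · -- `|log p| ≤ ε⁻¹ p^(-ε)` trades the logarithm for a loss of `ε` in the exponent
    have hs' : s₀ - ε < s := by
      have := (abs_lt.1 (Real.dist_eq s s₀ ▸ Metric.mem_ball.1 hs)).1
      linarith
    have hsplit : p x ^ (s - 1) = p x ^ ε * p x ^ (s - 1 - ε) := by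
      rw [← Real.rpow_add hx.1]; ring_nf
    calc ‖Real.log (p x) * (p x ^ (s - 1) * R x)‖
        = |Real.log (p x) * p x ^ ε| * (p x ^ (s - 1 - ε) * |R x|) := by
          rw [hsplit, Real.norm_eq_abs, abs_mul, abs_mul, abs_mul, abs_mul,
            abs_of_pos (Real.rpow_pos_of_pos hx.1 (s - 1 - ε))]
          ring
      _ ≤ ε⁻¹ * (p x ^ (v - 1) * |R x|) := by
          refine mul_le_mul ?_ ?_
            (mul_nonneg (Real.rpow_pos_of_pos hx.1 _).le (abs_nonneg _)) (by positivity)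
          · simpa only [one_div] using (Real.abs_log_mul_self_rpow_lt _ _ hx.1 hx.2 hε).le
          · exact mul_le_mul_of_nonneg_right
              (Real.rpow_le_rpow_of_exponent_ge hx.1 hx.2 (by linarith)) (abs_nonneg _)
      _ = ε⁻¹ * ‖p x ^ (v - 1) * R x‖ := by
          rw [Real.norm_eq_abs, abs_mul, abs_of_pos (Real.rpow_pos_of_pos hx.1 _)]
  · have hpow := ((Real.hasStrictDerivAt_const_rpow hx.1 (s - 1)).hasDerivAt.comp_sub_const s 1)
    exact (hpow.mul_const (R x)).congr_deriv (by ring)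

section Simplex

def openSimplex (n : ℕ) (u : ℝ) : Set (Fin n → ℝ) := {x | (∀ i, 0 < x i) ∧ ∑ i, x i < u}

noncomputable def dirichletKernel {n : ℕ} (β : Fin (n + 1) → ℝ) (u : ℝ) (x : Fin n → ℝ) : ℝ :=
  ∏ k, (Fin.snoc x (u - ∑ i, x i) : Fin (n + 1) → ℝ) k ^ (β k - 1)

variable {n : ℕ}

theorem measurableSet_openSimplex (n : ℕ) (u : ℝ) : MeasurableSet (openSimplex n u) := by
  simp only [openSimplex, ofPred_and, ofPred_forall]
  exact (MeasurableSet.iInter fun i =>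
    measurableSet_lt measurable_const (measurable_pi_apply i)).inter
      (measurableSet_lt (by fun_prop) measurable_const)

theorem measurable_dirichletKernel (β : Fin (n + 1) → ℝ) (u : ℝ) :
    Measurable (dirichletKernel β u) := by
  have hsnoc : Measurable fun x : Fin n → ℝ => (Fin.snoc x (u - ∑ i, x i) : Fin (n + 1) → ℝ) := by
    fun_prop
  exact Finset.measurable_prod _ fun k _ => ((measurable_pi_apply k).comp hsnoc).pow_const _

theorem snoc_mem_Ioc_of_mem_openSimplex {u : ℝ} {x : Fin n → ℝ} (hx : x ∈ openSimplex n u)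
    (k : Fin (n + 1)) : (Fin.snoc x (u - ∑ i, x i) : Fin (n + 1) → ℝ) k ∈ Ioc 0 u := by
  have hsum : 0 ≤ ∑ i, x i := sum_nonneg fun i _ => (hx.1 i).le
  induction k using Fin.lastCases with
  | last => simp only [Fin.snoc_last]; constructor <;> linarith [hx.2]
  | cast i =>
    simp only [Fin.snoc_castSucc]
    exact ⟨hx.1 i, (single_le_sum (fun i _ => (hx.1 i).le) (mem_univ i)).trans hx.2.le⟩

theorem dirichletKernel_pos (β : Fin (n + 1) → ℝ) {u : ℝ} {x : Fin n → ℝ}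
    (hx : x ∈ openSimplex n u) : 0 < dirichletKernel β u x :=
  prod_pos fun k _ => Real.rpow_pos_of_pos (snoc_mem_Ioc_of_mem_openSimplex hx k).1 _

theorem cons_mem_openSimplex_iff {u t : ℝ} {y : Fin n → ℝ} :
    (Fin.cons t y : Fin (n + 1) → ℝ) ∈ openSimplex (n + 1) u ↔
      t ∈ Ioo 0 u ∧ y ∈ openSimplex n (u - t) := by
  simp only [openSimplex, mem_ofPred_eq, Fin.forall_fin_succ, Fin.cons_zero, Fin.cons_succ,
    Fin.sum_cons, Set.mem_Ioo]
  constructor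
  · rintro ⟨⟨ht, hy⟩, hsum⟩
    have := sum_nonneg fun i (_ : i ∈ Finset.univ) => (hy i).le
    exact ⟨⟨ht, by linarith⟩, hy, by linarith⟩
  · rintro ⟨⟨ht, -⟩, hy, hsum⟩
    exact ⟨⟨ht, hy⟩, by linarith⟩

theorem dirichletKernel_cons (a : ℝ) (γ : Fin (n + 1) → ℝ) (u t : ℝ) (y : Fin n → ℝ) :
    dirichletKernel (Fin.cons a γ) u (Fin.cons t y) =
      t ^ (a - 1) * dirichletKernel γ (u - t) y := by
  rw [dirichletKernel, Fin.sum_cons, ← Fin.cons_snoc_eq_snoc_cons, Fin.prod_univ_succ]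
  simp only [Fin.cons_zero, Fin.cons_succ, dirichletKernel, sub_add_eq_sub_sub]

theorem lintegral_fin_cons {E : Type*} [MeasureSpace E] [SigmaFinite (volume : Measure E)]
    {f : (Fin (n + 1) → E) → ℝ≥0∞} (hf : Measurable f) :
    ∫⁻ x, f x = ∫⁻ t, ∫⁻ y, f (Fin.cons t y) := by
  have he := (volume_preserving_piFinSuccAbove (fun _ : Fin (n + 1) => E) 0).symm
  rw [← he.lintegral_comp hf, Measure.volume_eq_prod]
  refine (lintegral_prod (f ∘ _) (hf.comp he.measurable).aemeasurable).trans ?_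
  simp [MeasurableEquiv.piFinSuccAbove_symm_apply, Fin.consEquiv]

theorem lintegral_indicator_openSimplex_cons (a : ℝ) (γ : Fin (n + 1) → ℝ) (u t : ℝ) :
    ∫⁻ y, (openSimplex (n + 1) u).indicator
        (fun x => ENNReal.ofReal (dirichletKernel (Fin.cons a γ) u x)) (Fin.cons t y) =
      (Ioo 0 u).indicator (fun t => ENNReal.ofReal (t ^ (a - 1)) *
        ∫⁻ y in openSimplex n (u - t), ENNReal.ofReal (dirichletKernel γ (u - t) y)) t := by
  by_cases ht : t ∈ Ioo 0 u
  · rw [indicator_of_mem ht, ← lintegral_indicator (measurableSet_openSimplex _ _),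
      ← lintegral_const_mul' _ _ ENNReal.ofReal_ne_top]
    refine lintegral_congr fun y => ?_
    by_cases hy : y ∈ openSimplex n (u - t)
    · rw [indicator_of_mem (cons_mem_openSimplex_iff.2 ⟨ht, hy⟩), indicator_of_mem hy,
        dirichletKernel_cons, ENNReal.ofReal_mul (Real.rpow_nonneg ht.1.le _)]
    · rw [indicator_of_notMem (fun h => hy (cons_mem_openSimplex_iff.1 h).2),
        indicator_of_notMem hy, mul_zero]
  · have hzero : ∀ y, (openSimplex (n + 1) u).indicator
        (fun x => ENNReal.ofReal (dirichletKernel (Fin.cons a γ) u x)) (Fin.cons t y) = 0 :=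
      fun y => indicator_of_notMem (fun h => ht (cons_mem_openSimplex_iff.1 h).1) _
    simp [hzero, ht]

theorem lintegral_dirichletKernel {β : Fin (n + 1) → ℝ} (hβ : ∀ k, 0 < β k) {u : ℝ}
    (hu : 0 < u) :
    ∫⁻ x in openSimplex n u, ENNReal.ofReal (dirichletKernel β u x) =
      ENNReal.ofReal (u ^ (∑ k, β k - 1) * multiBeta β) := by
  induction n generalizing u with
  | zero =>
    have hunit : openSimplex 0 u = univ := by ext x; simp [openSimplex, hu]
    have hΓ := (Real.Gamma_pos_of_pos (hβ 0)).ne'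
    have hlast : ∀ x : Fin 0 → ℝ, (Fin.snoc x u : Fin 1 → ℝ) 0 = u := fun _ => rfl
    simp [hunit, dirichletKernel, multiBeta, hΓ, hlast, volume_pi]
  | succ n ih =>
    obtain ⟨a, γ, rfl⟩ : ∃ a γ, β = Fin.cons a γ := ⟨_, _, (Fin.cons_self_tail β).symm⟩
    have ha : 0 < a := hβ 0
    have hγ : ∀ k, 0 < γ k := fun k => hβ k.succ
    have hB : 0 < ∑ k, γ k := sum_pos (fun k _ => hγ k) univ_nonempty
    rw [← lintegral_indicator (measurableSet_openSimplex _ _), lintegral_fin_cons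
        ((measurable_dirichletKernel _ u).ennreal_ofReal.indicator (measurableSet_openSimplex _ _)),
      lintegral_congr (lintegral_indicator_openSimplex_cons a γ u),
      lintegral_indicator measurableSet_Ioo,
      setLIntegral_congr_fun measurableSet_Ioo fun t ht => by
        rw [ih hγ (sub_pos.2 ht.2), ← ENNReal.ofReal_mul (Real.rpow_nonneg ht.1.le _), ← mul_assoc,
          ENNReal.ofReal_mul' (multiBeta_pos hγ).le],
      lintegral_mul_const' _ _ ENNReal.ofReal_ne_top, lintegral_rpow_mul_sub_rpow ha hB hu,
      ← ENNReal.ofReal_mul (mul_nonneg (by positivity) (beta_pos ha hB).le),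
      multiBeta_cons a γ (Real.Gamma_pos_of_pos hB).ne', Fin.sum_cons, mul_assoc]

theorem integrableOn_dirichletKernel {β : Fin (n + 1) → ℝ} (hβ : ∀ k, 0 < β k) {u : ℝ}
    (hu : 0 < u) : IntegrableOn (dirichletKernel β u) (openSimplex n u) := by
  refine (lintegral_ofReal_ne_top_iff_integrable
    (measurable_dirichletKernel β u).aestronglyMeasurable ?_).1 ?_
  · exact (ae_restrict_mem (measurableSet_openSimplex n u)).mono fun x hx =>
      (dirichletKernel_pos β hx).le
  · rw [lintegral_dirichletKernel hβ hu]
    exact ENNReal.ofReal_ne_top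

theorem setIntegral_dirichletKernel {β : Fin (n + 1) → ℝ} (hβ : ∀ k, 0 < β k) {u : ℝ}
    (hu : 0 < u) :
    ∫ x in openSimplex n u, dirichletKernel β u x = u ^ (∑ k, β k - 1) * multiBeta β := by
  rw [integral_eq_lintegral_of_nonneg_ae
    ((ae_restrict_mem (measurableSet_openSimplex n u)).mono fun x hx =>
      (dirichletKernel_pos β hx).le) (measurable_dirichletKernel β u).aestronglyMeasurable,
    lintegral_dirichletKernel hβ hu,
    ENNReal.toReal_ofReal (by have := multiBeta_pos hβ; positivity)]

end Simplex

section Moments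

variable {n : ℕ}

theorem measurable_simplexCoords (k : Fin (n + 1)) : Measurable fun x => simplexCoords n x k :=
  (measurable_pi_apply k).comp (by fun_prop)

theorem dirichletKernel_one (β : Fin (n + 1) → ℝ) (x : Fin n → ℝ) :
    dirichletKernel β 1 x = ∏ k, simplexCoords n x k ^ (β k - 1) := rfl

theorem simplexCoords_mul_dirichletKernel (β : Fin (n + 1) → ℝ) {x : Fin n → ℝ} {k : Fin (n + 1)}
    (hk : 0 < simplexCoords n x k) :
    simplexCoords n x k * dirichletKernel β 1 x =
      dirichletKernel (Function.update β k (β k + 1)) 1 x := by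
  rw [dirichletKernel_one, dirichletKernel_one,
    prod_apply_update (fun k b => simplexCoords n x k ^ (b - 1)),
    ← mul_prod_erase univ _ (mem_univ k),
    add_sub_cancel_right, ← mul_assoc]
  nth_rw 2 [← sub_add_cancel (β k) 1]
  rw [Real.rpow_add_one hk.ne', mul_comm (simplexCoords n x k)]

theorem integral_log_mul_dirichletKernel {β : Fin (n + 1) → ℝ} (hβ : ∀ k, 0 < β k)
    (j : Fin (n + 1)) :
    IntegrableOn (fun x => Real.log (simplexCoords n x j) * dirichletKernel β 1 x)
        (openSimplex n 1) ∧
      ∫ x in openSimplex n 1, Real.log (simplexCoords n x j) * dirichletKernel β 1 x =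
        multiBeta β * (digamma (β j) - digamma (∑ k, β k)) := by
  set R := fun x => ∏ k ∈ univ.erase j, simplexCoords n x k ^ (β k - 1)
  have hkernel : ∀ s x,
      dirichletKernel (Function.update β j s) 1 x = simplexCoords n x j ^ (s - 1) * R x :=
    fun s x => prod_apply_update (fun k b => simplexCoords n x k ^ (b - 1)) β j s
  obtain ⟨hint, hderiv⟩ := hasDerivAt_integral_rpow_mul (μ := volume.restrict (openSimplex n 1))
    (p := fun x => simplexCoords n x j) (R := R) (measurable_simplexCoords j).aemeasurable
    ((ae_restrict_mem (measurableSet_openSimplex n 1)).mono fun x hx =>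
      snoc_mem_Ioc_of_mem_openSimplex hx j) (hβ j)
    fun s hs => by
      have := integrableOn_dirichletKernel (update_pos hβ j hs) one_pos
      rwa [funext (hkernel s)] at this
  have hvalue : ∀ s ∈ Set.Ioi 0, ∫ x in openSimplex n 1, simplexCoords n x j ^ (s - 1) * R x =
      multiBeta (Function.update β j s) := fun s hs => by
    simpa only [hkernel, Real.one_rpow, one_mul] using
      setIntegral_dirichletKernel (update_pos hβ j hs) one_pos
  have hβj : ∀ x, simplexCoords n x j ^ (β j - 1) * R x = dirichletKernel β 1 x := fun x => by
    rw [← hkernel, Function.update_eq_self]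
  simp only [hβj] at hint hderiv
  exact ⟨hint, hderiv.unique ((hasDerivAt_multiBeta_update hβ j).congr_of_eventuallyEq
    (Filter.eventually_of_mem (Ioi_mem_nhds (hβ j)) hvalue))⟩

theorem dirichletDensity_eq (α : Fin (n + 1) → ℝ) (x : Fin n → ℝ) :
    dirichletDensity n α x = (multiBeta α)⁻¹ * dirichletKernel α 1 x := by
  rw [dirichletDensity, multiBeta, inv_div, dirichletKernel_one]

theorem entropy_mul_dirichletDensity (α : Fin (n + 1) → ℝ) {x : Fin n → ℝ}
    (hx : x ∈ openSimplex n 1) :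
    (∑ k, simplexCoords n x k * Real.log (1 / simplexCoords n x k)) * dirichletDensity n α x =
      -(multiBeta α)⁻¹ * ∑ k, Real.log (simplexCoords n x k) *
        dirichletKernel (Function.update α k (α k + 1)) 1 x := by
  simp only [← simplexCoords_mul_dirichletKernel α (snoc_mem_Ioc_of_mem_openSimplex hx _).1,
    dirichletDensity_eq, one_div, Real.log_inv, mul_sum, sum_mul]
  exact sum_congr rfl fun k _ => by ring

end Moments

theorem dirichlet_expected_normalized_entropy_general
    (n : ℕ) (α : Fin (n + 1) → ℝ) (hα : ∀ k, 0 < α k)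
    (α₀ : ℝ) (hα₀ : α₀ = ∑ k, α k) :
    ∫ x in {x : Fin n → ℝ | (∀ i, 0 < x i) ∧ ∑ i, x i < 1},
        ((∑ k, simplexCoords n x k * Real.log (1 / simplexCoords n x k)) /
            Real.log (n + 1)) * dirichletDensity n α x
      = (1 / Real.log (n + 1)) *
        (digamma (α₀ + 1) - ∑ k, (α k / α₀) * digamma (α k + 1)) := by
  have hα' : ∀ k j, 0 < Function.update α k (α k + 1) j := fun k =>
    update_pos hα k (by linarith [hα k])
  change ∫ x in openSimplex n 1, _ = _
  rw [setIntegral_congr_fun (measurableSet_openSimplex n 1) fun x hx => by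
      rw [div_mul_eq_mul_div, entropy_mul_dirichletDensity α hx],
    integral_div, integral_const_mul,
    integral_finsetSum _ fun k _ => (integral_log_mul_dirichletKernel (hα' k) k).1]
  simp only [(integral_log_mul_dirichletKernel (hα' _) _).2, Function.update_self, sum_update_add,
    multiBeta_update_add_one hα, ← hα₀]
  have hα₀1 : ∑ k, α k / α₀ = 1 := by
    rw [← sum_div, ← hα₀, div_self (hα₀ ▸ sum_pos (fun k _ => hα k) univ_nonempty).ne']
  have hM := (multiBeta_pos hα).ne'
  calc _ = (∑ k, α k / α₀ * digamma (α₀ + 1) - ∑ k, α k / α₀ * digamma (α k + 1)) /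
        Real.log (n + 1) := by
        rw [mul_sum, ← sum_sub_distrib]
        exact congrArg (· / _) (sum_congr rfl fun k _ => by field_simp; ring)
    _ = _ := by rw [← sum_mul, hα₀1, one_mul, one_div_mul_eq_div]

/-- The Dirichlet expectation of the normalized Shannon entropy
`H̃(p) = (1/log C) ∑ p_k log(1/p_k)` (with `C = n+1` categories) equals
`(1/log C)·[ψ(α₀+1) - ∑ (α_k/α₀) ψ(α_k+1)]`. -/
theorem dirichlet_expected_normalized_entropy
    (n : ℕ) (hn : 1 ≤ n) (α : Fin (n + 1) → ℝ) (hα : ∀ k, 0 < α k)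
    (α₀ : ℝ) (hα₀ : α₀ = ∑ k, α k) :
    ∫ x in {x : Fin n → ℝ | (∀ i, 0 < x i) ∧ ∑ i, x i < 1},
        ((∑ k, simplexCoords n x k * Real.log (1 / simplexCoords n x k)) /
            Real.log (n + 1)) * dirichletDensity n α x
      = (1 / Real.log (n + 1)) *
        (digamma (α₀ + 1) - ∑ k, (α k / α₀) * digamma (α k + 1)) :=
  dirichlet_expected_normalized_entropy_general n α hα α₀ hα₀
end

section
/- Let C ≥ 1, let q = (q_1, …, q_C, q_cs) be a probability vector on C+1 categories with q_cs < 1, and let n ≥ 1. For a count vector m = (m_1, …, m_C, m_cs) of nonnegative integers summing to n, define the plug-in ambiguity estimator = 1 − (𝟙[m_cs < n]/(n(n − m_cs)))·Σ_{k=1}^C m_k². Then the expectation of over count vectors distributed multinomially with parameters (n, q), i.e. Σ over all such m of (n!/(m_1!⋯m_C!·m_cs!))·q_cs^{m_cs}·∏_{k=1}^C q_k^{m_k} times Â(m), equals (1 − (1 − q_cs^n)/n) − [1/(1−q_cs) − (1 − q_cs^n)/(n(1−q_cs)²)]·Σ_{k=1}^C q_k². -/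
open Finset

/-- The plug-in ambiguity estimator for a count vector `m = (m₁, …, m_C, m_cs)`
(indexed over `Fin (C+1)`, with the last index the can't-solve category) based on
`n` responses: `1 - (𝟙[m_cs < n]/(n(n - m_cs)))·∑ m_k²`. -/
noncomputable def plugInAmb (C : ℕ) (n : ℕ) (m : Fin (C + 1) → ℕ) : ℝ :=
  1 - ((if m (Fin.last C) < n then (1 : ℝ) else 0) /
        ((n : ℝ) * ((n : ℝ) - (m (Fin.last C) : ℝ)))) *
      ∑ k : Fin C, ((m k.castSucc : ℝ)) ^ 2

/-- The multinomial probability mass function of the count vector `m` for `n`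
responses with category probabilities `Q`. -/
noncomputable def multinomialPMF (C : ℕ) (n : ℕ) (Q : Fin (C + 1) → ℝ)
    (m : Fin (C + 1) → ℕ) : ℝ :=
  ((n.factorial : ℝ) / ∏ i, ((m i).factorial : ℝ)) * ∏ i, Q i ^ m i

/-!
Conditionally on the can't-solve count `m_cs = j`, the other counts are multinomial with
`N = n - j` trials and probabilities `p_k = q_k / (1 - q_cs)`. The factorial moments
`E[m_k (m_k - 1)] = N (N - 1) p_k²` and `E[m_k] = N p_k` give
`E[∑ m_k² | N] = N (N - 1) ∑ p_k² + N`, so after dividing by `n N` (for `N > 0`) the estimator's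
expectation only involves `E[N] = n (1 - q_cs)` and `P(N > 0) = 1 - q_cs ^ n` for the binomial
variable `N`.
-/

open Nat

section MultinomialWeight

variable {ι : Type*} [Fintype ι]

noncomputable def multinomialWeight (N : ℕ) (q : ι → ℝ) (m : ι → ℕ) : ℝ :=
  ((N ! : ℝ) / ∏ i, ((m i)! : ℝ)) * ∏ i, q i ^ m i

theorem sum_multinomialWeight [DecidableEq ι] (q : ι → ℝ) (N : ℕ) :
    ∑ m ∈ piAntidiag univ N, multinomialWeight N q m = (∑ i, q i) ^ N := by
  rw [sum_pow_eq_sum_piAntidiag]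
  refine sum_congr rfl fun m hm => ?_
  have hfac : (∏ i, ((m i)! : ℝ)) * Nat.multinomial univ m = N ! := by
    exact_mod_cast (mem_piAntidiag.1 hm).1 ▸ Nat.multinomial_spec univ m
  rw [multinomialWeight, ← hfac, mul_div_cancel_left₀ _ (by positivity)]

theorem multinomialWeight_smul (c : ℝ) (p : ι → ℝ) {N : ℕ} {m : ι → ℕ} (hm : ∑ i, m i = N) :
    multinomialWeight N (c • p) m = c ^ N * multinomialWeight N p m := by
  simp only [multinomialWeight, Pi.smul_apply, smul_eq_mul, mul_pow, prod_mul_distrib,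
    prod_pow_eq_pow_sum, hm]
  ring

variable [DecidableEq ι]

theorem multinomialWeight_add_single (q : ι → ℝ) (N : ℕ) (m : ι → ℕ) (k : ι) :
    (m k + 1) * multinomialWeight (N + 1) q (m + Pi.single k 1)
      = (N + 1) * q k * multinomialWeight N q m := by
  have hfac : ∀ i, (((m + Pi.single k 1 : ι → ℕ) i)! : ℝ)
      = (m i)! * if i = k then (m k + 1 : ℝ) else 1 := by
    intro i
    by_cases h : i = k
    · subst h; simp [Nat.factorial_succ, mul_comm]
    · simp [h]
  have hpow : ∀ i, q i ^ (m + Pi.single k 1 : ι → ℕ) i = q i ^ m i * if i = k then q k else 1 := by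
    intro i
    by_cases h : i = k
    · subst h; simp [pow_succ]
    · simp [h]
  simp only [multinomialWeight, hfac, hpow, prod_mul_distrib, prod_ite_eq', mem_univ, if_true,
    Nat.factorial_succ]
  have : (∏ i, ((m i)! : ℝ)) ≠ 0 := by positivity
  field_simp
  push_cast
  ring

/-- `m ↦ m + Pi.single k 1` matches the count vectors of total `N` with those of total `N + 1`
whose `k`-th count is nonzero. -/
theorem sum_multinomialWeight_mul_apply_mul (q : ι → ℝ) (N : ℕ) (k : ι) (G : (ι → ℕ) → ℝ) :
    ∑ m ∈ piAntidiag univ (N + 1), multinomialWeight (N + 1) q m * (m k * G m)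
      = (N + 1) * q k * ∑ m ∈ piAntidiag univ N,
          multinomialWeight N q m * G (m + Pi.single k 1) := by
  have hterm : ∀ m : ι → ℕ, (N + 1) * q k * (multinomialWeight N q m * G (m + Pi.single k 1))
      = multinomialWeight (N + 1) q (m + Pi.single k 1)
          * ((m + Pi.single k 1 : ι → ℕ) k * G (m + Pi.single k 1)) := by
    intro m
    rw [← mul_assoc, ← multinomialWeight_add_single]
    simp only [Pi.add_apply, Pi.single_eq_same, Nat.cast_add, Nat.cast_one]
    ring
  rw [mul_sum]
  symm
  refine sum_bij_ne_zero (fun m _ _ => m + Pi.single k 1) ?_ (fun _ _ _ _ _ _ => add_right_cancel)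
    ?_ fun m _ _ => hterm m
  · intro m hm _
    simpa [sum_add_distrib] using hm
  · intro m hm hne
    have hk : m k ≠ 0 := by
      rintro h
      simp [h] at hne
    have hsplit : m - Pi.single k 1 + Pi.single k 1 = m := by
      refine tsub_add_cancel_of_le fun i => ?_
      by_cases h : i = k
      · subst h; simpa [Nat.one_le_iff_ne_zero] using hk
      · simp [h]
    refine ⟨m - Pi.single k 1, ?_, ?_, hsplit⟩
    · have hsum := (mem_piAntidiag.1 hm).1
      rw [← hsplit] at hsum
      simpa [sum_add_distrib] using hsum
    · rwa [hterm, hsplit]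

variable {p : ι → ℝ}

theorem sum_multinomialWeight_mul_apply (hp : ∑ i, p i = 1) (N : ℕ) (k : ι) :
    ∑ m ∈ piAntidiag univ N, multinomialWeight N p m * m k = N * p k := by
  cases N with
  | zero => simp
  | succ N =>
    simpa [sum_multinomialWeight, hp] using sum_multinomialWeight_mul_apply_mul p N k 1

theorem sum_multinomialWeight_mul_apply_mul_sub_one (hp : ∑ i, p i = 1) (N : ℕ) (k : ι) :
    ∑ m ∈ piAntidiag univ N, multinomialWeight N p m * (m k * (m k - 1))
      = N * (N - 1) * p k ^ 2 := by
  cases N with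
  | zero => simp
  | succ N =>
    rw [sum_multinomialWeight_mul_apply_mul p N k fun m => (m k : ℝ) - 1]
    simp only [Pi.add_apply, Pi.single_eq_same, Nat.cast_add, Nat.cast_one, add_sub_cancel_right,
      sum_multinomialWeight_mul_apply hp]
    ring

theorem sum_multinomialWeight_mul_sum_sq (hp : ∑ i, p i = 1) (N : ℕ) :
    ∑ m ∈ piAntidiag univ N, multinomialWeight N p m * ∑ k, (m k : ℝ) ^ 2
      = N * (N - 1) * ∑ k, p k ^ 2 + N := by
  have hsq : ∀ m : ι → ℕ, ∀ k, multinomialWeight N p m * (m k : ℝ) ^ 2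
      = multinomialWeight N p m * (m k * (m k - 1)) + multinomialWeight N p m * m k :=
    fun _ _ => by ring
  simp_rw [mul_sum, hsq]
  rw [sum_comm]
  simp only [sum_add_distrib, sum_multinomialWeight_mul_apply_mul_sub_one hp,
    sum_multinomialWeight_mul_apply hp, ← mul_sum, hp]
  ring

end MultinomialWeight

theorem sum_antidiagonalTuple_succ_eq_sum_snoc {M : Type*} [AddCommMonoid M] (c n : ℕ)
    (F : (Fin (c + 1) → ℕ) → M) :
    ∑ m ∈ Nat.antidiagonalTuple (c + 1) n, F m
      = ∑ j ∈ range (n + 1), ∑ m ∈ Nat.antidiagonalTuple c (n - j), F (Fin.snoc m j) := by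
  rw [sum_sigma']
  refine sum_nbij' (fun m => ⟨m (Fin.last c), Fin.init m⟩) (fun p => Fin.snoc p.2 p.1)
    ?_ ?_ (fun m _ => Fin.snoc_init_self m) (fun p _ => by simp) (fun m _ => by simp)
  · intro m hm
    simp only [mem_sigma, mem_range, Nat.mem_antidiagonalTuple, Fin.sum_univ_castSucc] at hm ⊢
    exact ⟨by omega, by simp only [Fin.init]; omega⟩
  · intro p hp
    simp only [mem_sigma, mem_range, Nat.mem_antidiagonalTuple] at hp ⊢
    simp only [Fin.sum_univ_castSucc, Fin.snoc_castSucc, Fin.snoc_last]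
    omega

theorem multinomialWeight_snoc {c : ℕ} (q : Fin c → ℝ) (t : ℝ) (m : Fin c → ℕ) {n j : ℕ}
    (hj : j ≤ n) :
    multinomialWeight n (Fin.snoc q t) (Fin.snoc m j)
      = n.choose j * t ^ j * multinomialWeight (n - j) q m := by
  simp only [multinomialWeight, Fin.prod_univ_castSucc, Fin.snoc_castSucc, Fin.snoc_last,
    Nat.cast_choose ℝ hj]
  have : (∏ i, ((m i)! : ℝ)) ≠ 0 := by positivity
  field_simp

theorem sum_range_choose_mul_pow_mul_one_sub_pow (n : ℕ) (t : ℝ) :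
    ∑ j ∈ range (n + 1), n.choose j * t ^ j * (1 - t) ^ (n - j) = 1 := by
  simpa [bernsteinPolynomial, Polynomial.eval_finsetSum] using
    congrArg (Polynomial.eval t) (bernsteinPolynomial.sum ℝ n)

theorem sum_range_mul_choose_mul_pow_mul_one_sub_pow (n : ℕ) (t : ℝ) :
    ∑ j ∈ range (n + 1), j * (n.choose j * t ^ j * (1 - t) ^ (n - j)) = n * t := by
  simpa [bernsteinPolynomial, Polynomial.eval_finsetSum] using
    congrArg (Polynomial.eval t) (bernsteinPolynomial.sum_smul ℝ n)

theorem sum_range_choose_mul_one_sub_ite {n : ℕ} (hn : n ≠ 0) (t a : ℝ) :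
    ∑ j ∈ range (n + 1), n.choose j * t ^ j * (1 - t) ^ (n - j) *
        (1 - (if j < n then ((n : ℝ) - j - 1) * a + 1 else 0) / n)
      = 1 - (1 - t ^ n) / n - (1 - t - (1 - t ^ n) / n) * a := by
  have hn' : (n : ℝ) ≠ 0 := Nat.cast_ne_zero.2 hn
  have hmass := sum_range_choose_mul_pow_mul_one_sub_pow n t
  have hmean := sum_range_mul_choose_mul_pow_mul_one_sub_pow n t
  simp only [sum_range_succ _ n, Nat.choose_self, Nat.sub_self, pow_zero] at hmass hmean ⊢
  have hterm : ∀ j ∈ range n,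
      n.choose j * t ^ j * (1 - t) ^ (n - j) *
          (1 - (if j < n then ((n : ℝ) - j - 1) * a + 1 else 0) / n)
        = (1 - (1 - a) / n - a) * (n.choose j * t ^ j * (1 - t) ^ (n - j))
          + a / n * (j * (n.choose j * t ^ j * (1 - t) ^ (n - j))) := by
    intro j hj
    rw [if_pos (mem_range.1 hj)]
    field_simp
    ring
  rw [sum_congr rfl hterm, sum_add_distrib, ← mul_sum, ← mul_sum,
    eq_sub_of_add_eq hmass, eq_sub_of_add_eq hmean]
  simp only [lt_irrefl, if_false]
  field_simp
  ring

theorem plugInAmb_snoc (C n j : ℕ) (m : Fin C → ℕ) :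
    plugInAmb C n (Fin.snoc m j)
      = 1 - (if j < n then (1 : ℝ) else 0) / (n * (n - j)) * ∑ k, (m k : ℝ) ^ 2 := by
  simp only [plugInAmb, Fin.snoc_last, Fin.snoc_castSucc]

theorem sum_multinomialPMF_snoc_mul_plugInAmb {C n j : ℕ} (hj : j ≤ n) (q : Fin C → ℝ)
    (hs : ∑ k, q k ≠ 0) (t : ℝ) :
    ∑ m ∈ Nat.antidiagonalTuple C (n - j),
        multinomialPMF C n (Fin.snoc q t) (Fin.snoc m j) * plugInAmb C n (Fin.snoc m j)
      = n.choose j * t ^ j * (∑ k, q k) ^ (n - j) *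
          (1 - (if j < n then ((n : ℝ) - j - 1) * ((∑ k, q k ^ 2) / (∑ k, q k) ^ 2) + 1
            else 0) / n) := by
  set s := ∑ k, q k
  set p := s⁻¹ • q with hp_def
  have hq : q = s • p := by rw [hp_def, smul_inv_smul₀ hs]
  have hp : ∑ k, p k = 1 := by
    simpa [hp_def, ← mul_sum] using inv_mul_cancel₀ hs
  have hpsq : ∑ k, p k ^ 2 = (∑ k, q k ^ 2) / s ^ 2 := by
    simp [hp_def, mul_pow, ← mul_sum, div_eq_inv_mul]
  have hterm : ∀ m ∈ piAntidiag univ (n - j),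
      multinomialPMF C n (Fin.snoc q t) (Fin.snoc m j) * plugInAmb C n (Fin.snoc m j)
        = n.choose j * t ^ j * s ^ (n - j) * (multinomialWeight (n - j) p m
          - (if j < n then (1 : ℝ) else 0) / (n * (n - j))
            * (multinomialWeight (n - j) p m * ∑ k, (m k : ℝ) ^ 2)) := by
    intro m hm
    rw [multinomialPMF, ← multinomialWeight, multinomialWeight_snoc q t m hj, plugInAmb_snoc,
      hq, multinomialWeight_smul s p (mem_piAntidiag.1 hm).1]
    ring
  rw [← piAntidiag_univ_fin_eq_antidiagonalTuple, sum_congr rfl hterm, ← mul_sum, sum_sub_distrib,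
    ← mul_sum, sum_multinomialWeight, sum_multinomialWeight_mul_sum_sq hp, hp, one_pow, hpsq]
  rcases hj.lt_or_eq with hlt | rfl
  · have hn : (n : ℝ) ≠ 0 := Nat.cast_ne_zero.2 (by omega)
    have hnj : (n : ℝ) - j ≠ 0 := sub_ne_zero.2 (by exact_mod_cast hlt.ne')
    simp only [if_pos hlt, Nat.cast_sub hlt.le]
    field_simp
  · simp

theorem expected_plugin_ambiguity_general
    (C : ℕ) (n : ℕ) (hn : 1 ≤ n)
    (q : Fin C → ℝ) (qcs : ℝ)
    (hsum : (∑ k, q k) + qcs = 1) (hlt : qcs < 1) :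
    ∑ m ∈ Finset.Nat.antidiagonalTuple (C + 1) n,
        multinomialPMF C n (Fin.snoc q qcs) m * plugInAmb C n m
      = (1 - (1 - qcs ^ n) / n) -
        (1 / (1 - qcs) - (1 - qcs ^ n) / (n * (1 - qcs) ^ 2)) * ∑ k, (q k) ^ 2 := by
  have hs : ∑ k, q k = 1 - qcs := by linarith
  have hs0 : 1 - qcs ≠ 0 := by linarith
  rw [sum_antidiagonalTuple_succ_eq_sum_snoc,
    sum_congr rfl fun j hj => sum_multinomialPMF_snoc_mul_plugInAmb
      (Nat.lt_add_one_iff.1 (mem_range.1 hj)) q (hs ▸ hs0) qcs,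
    hs, sum_range_choose_mul_one_sub_ite (by omega)]
  field_simp

/-- The multinomial expectation of the plug-in ambiguity estimator equals
`(1 - (1 - q_cs^n)/n) - [1/(1-q_cs) - (1 - q_cs^n)/(n(1-q_cs)²)]·∑ q_k²`. -/
theorem expected_plugin_ambiguity
    (C : ℕ) (hC : 1 ≤ C) (n : ℕ) (hn : 1 ≤ n)
    (q : Fin C → ℝ) (qcs : ℝ)
    (hq : ∀ k, 0 ≤ q k) (hqcs : 0 ≤ qcs)
    (hsum : (∑ k, q k) + qcs = 1) (hlt : qcs < 1) :
    ∑ m ∈ Finset.Nat.antidiagonalTuple (C + 1) n,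
        multinomialPMF C n (Fin.snoc q qcs) m * plugInAmb C n m
      = (1 - (1 - qcs ^ n) / n) -
        (1 / (1 - qcs) - (1 - qcs ^ n) / (n * (1 - qcs) ^ 2)) * ∑ k, (q k) ^ 2 :=
  expected_plugin_ambiguity_general C n hn q qcs hsum hlt
end

section
/- Let α, β, α_cs ≥ 1 be real parameters and let f_{a,b} denote the Beta(a,b) probability density function on (0,1). For a ∈ (0,1) define ξ(a,u) = (1/2)(1 − √(2(1−a)/(1−u) − 1)) and ∂_aξ(a,u) = 1/(2√((1−u)((1−a) + (u−a)))), and define P(a) = ∫_{max(0, 2a−1)}^{a} f_{α_cs, α+β}(u)·[f_{α,β}(ξ(a,u)) + f_{α,β}(1 − ξ(a,u))]·∂_aξ(a,u) du (the posterior density of the standard ambiguity in the three-category case). Then P(1−ε) ≤ 2K√ε for some constant K and all sufficiently small ε > 0; in particular, P(a) → 0 as a → 1⁻. -/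
open Filter Topology intervalIntegral

/-- The Beta(a,b) probability density `π^(a-1)(1-π)^(b-1)/B(a,b)` on `(0,1)`,
with `B(a,b) = Γ(a)Γ(b)/Γ(a+b)`. -/
noncomputable def betaPDF (a b : ℝ) (x : ℝ) : ℝ :=
  x ^ (a - 1) * (1 - x) ^ (b - 1) /
    (Real.Gamma a * Real.Gamma b / Real.Gamma (a + b))

/-- `ξ(a,u) = ½(1 - √(2(1-a)/(1-u) - 1))` for the standard ambiguity. -/
noncomputable def xiStd (a u : ℝ) : ℝ :=
  (1 / 2) * (1 - Real.sqrt (2 * (1 - a) / (1 - u) - 1))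

/-- `∂ₐξ(a,u) = 1/(2√((1-u)((1-a)+(u-a))))` for the standard ambiguity. -/
noncomputable def dxiStd (a u : ℝ) : ℝ :=
  1 / (2 * Real.sqrt ((1 - u) * ((1 - a) + (u - a))))

/-- The posterior density of the standard ambiguity in the three-category case:
`P(a) = ∫_{max(0,2a-1)}^a f_{α_cs,α+β}(u)·[f_{α,β}(ξ) + f_{α,β}(1-ξ)]·∂ₐξ du`. -/
noncomputable def ambPosterior (α β αcs : ℝ) (a : ℝ) : ℝ :=
  ∫ u in (max 0 (2 * a - 1))..a,
    betaPDF αcs (α + β) u *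
      (betaPDF α β (xiStd a u) + betaPDF α β (1 - xiStd a u)) * dxiStd a u

lemma betaPDF_nonneg {a b x : ℝ} (ha : 0 < a) (hb : 0 < b)
    (hx0 : 0 ≤ x) (hx1 : x ≤ 1) : 0 ≤ betaPDF a b x := by
  have hB : 0 < Real.Gamma a * Real.Gamma b / Real.Gamma (a + b) :=
    div_pos (mul_pos (Real.Gamma_pos_of_pos ha) (Real.Gamma_pos_of_pos hb))
      (Real.Gamma_pos_of_pos (by linarith))
  exact div_nonneg
    (mul_nonneg (Real.rpow_nonneg hx0 _) (Real.rpow_nonneg (by linarith) _)) hB.le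

lemma betaPDF_le {a b x : ℝ} (ha : 1 ≤ a) (hb : 1 ≤ b)
    (hx0 : 0 ≤ x) (hx1 : x ≤ 1) :
    betaPDF a b x ≤ 1 / (Real.Gamma a * Real.Gamma b / Real.Gamma (a + b)) := by
  have hB : 0 < Real.Gamma a * Real.Gamma b / Real.Gamma (a + b) :=
    div_pos (mul_pos (Real.Gamma_pos_of_pos (by linarith)) (Real.Gamma_pos_of_pos (by linarith)))
      (Real.Gamma_pos_of_pos (by linarith))
  unfold betaPDF
  have hN : x ^ (a - 1) * (1 - x) ^ (b - 1) ≤ 1 :=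
    mul_le_one₀ (Real.rpow_le_one hx0 hx1 (by linarith))
      (Real.rpow_nonneg (by linarith) _)
      (Real.rpow_le_one (by linarith) (by linarith) (by linarith))
  exact div_le_div_of_nonneg_right hN hB.le

/-- Bounds on `ξ(1-ε, u)` for `u ∈ [1-2ε, 1-ε]`. -/
lemma xiStd_mem {ε u : ℝ} (hε0 : 0 < ε) (hu1 : 1 - 2 * ε ≤ u) (hu2 : u ≤ 1 - ε) :
    0 ≤ xiStd (1 - ε) u ∧ xiStd (1 - ε) u ≤ 1 := by
  have h1u : 0 < 1 - u := by linarith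
  have harg1 : 2 * (1 - (1 - ε)) / (1 - u) - 1 ≤ 1 := by
    rw [sub_le_iff_le_add, div_le_iff₀ h1u]
    ring_nf
    linarith
  have hs0 : 0 ≤ Real.sqrt (2 * (1 - (1 - ε)) / (1 - u) - 1) := Real.sqrt_nonneg _
  have hs1 : Real.sqrt (2 * (1 - (1 - ε)) / (1 - u) - 1) ≤ 1 :=
    Real.sqrt_le_one.mpr harg1
  constructor
  · unfold xiStd; nlinarith
  · unfold xiStd; nlinarith

/-- The key quantitative estimate: for `0 < ε < 1/2`,
`0 ≤ P(1-ε) ≤ 4ε / (B(α_cs, α+β) · B(α, β))`. -/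
lemma ambPosterior_key (α β αcs : ℝ) (hα : 1 ≤ α) (hβ : 1 ≤ β) (hαcs : 1 ≤ αcs)
    {ε : ℝ} (hε0 : 0 < ε) (hε2 : ε < 1 / 2) :
    0 ≤ ambPosterior α β αcs (1 - ε) ∧
      ambPosterior α β αcs (1 - ε) ≤ 4 * ε /
        ((Real.Gamma αcs * Real.Gamma (α + β) / Real.Gamma (αcs + (α + β))) *
          (Real.Gamma α * Real.Gamma β / Real.Gamma (α + β))) := by
  set Bcs : ℝ := Real.Gamma αcs * Real.Gamma (α + β) / Real.Gamma (αcs + (α + β)) with hBcs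
  set Bab : ℝ := Real.Gamma α * Real.Gamma β / Real.Gamma (α + β) with hBab
  have hBcs_pos : 0 < Bcs :=
    div_pos (mul_pos (Real.Gamma_pos_of_pos (by linarith)) (Real.Gamma_pos_of_pos (by linarith)))
      (Real.Gamma_pos_of_pos (by linarith))
  have hBab_pos : 0 < Bab :=
    div_pos (mul_pos (Real.Gamma_pos_of_pos (by linarith)) (Real.Gamma_pos_of_pos (by linarith)))
      (Real.Gamma_pos_of_pos (by linarith))
  have hmax : max 0 (2 * (1 - ε) - 1) = 1 - 2 * ε := by
    rw [max_eq_right (by linarith : (0:ℝ) ≤ 2 * (1 - ε) - 1)]; ring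
  have hca : 1 - 2 * ε ≤ 1 - ε := by linarith
  have hsε : 0 < Real.sqrt ε := Real.sqrt_pos.mpr hε0
  -- nonnegativity of the integrand on the closed interval
  have hnn : ∀ u ∈ Set.Icc (1 - 2 * ε) (1 - ε),
      0 ≤ betaPDF αcs (α + β) u *
        (betaPDF α β (xiStd (1 - ε) u) + betaPDF α β (1 - xiStd (1 - ε) u)) *
          dxiStd (1 - ε) u := by
    intro u hu
    obtain ⟨hu1, hu2⟩ := hu
    obtain ⟨hx0, hx1⟩ := xiStd_mem hε0 hu1 hu2
    have h1 : 0 ≤ betaPDF αcs (α + β) u :=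
      betaPDF_nonneg (by linarith) (by linarith) (by linarith) (by linarith)
    have h2 : 0 ≤ betaPDF α β (xiStd (1 - ε) u) :=
      betaPDF_nonneg (by linarith) (by linarith) hx0 hx1
    have h3 : 0 ≤ betaPDF α β (1 - xiStd (1 - ε) u) :=
      betaPDF_nonneg (by linarith) (by linarith) (by linarith) (by linarith)
    have h4 : 0 ≤ dxiStd (1 - ε) u := by
      unfold dxiStd; positivity
    positivity
  -- pointwise domination on the half-open interval
  have hdom : ∀ u ∈ Set.Ioc (1 - 2 * ε) (1 - ε),
      betaPDF αcs (α + β) u *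
        (betaPDF α β (xiStd (1 - ε) u) + betaPDF α β (1 - xiStd (1 - ε) u)) *
          dxiStd (1 - ε) u ≤
        (2 * ε / Bcs) * (2 / Bab) *
          ((1 / (2 * Real.sqrt ε)) * (u - (1 - 2 * ε)) ^ (-(1 / 2) : ℝ)) := by
    intro u hu
    obtain ⟨hu1, hu2⟩ := hu
    obtain ⟨hx0, hx1⟩ := xiStd_mem hε0 hu1.le hu2
    have huc : 0 < u - (1 - 2 * ε) := by linarith
    have h1u : 0 < 1 - u := by linarith
    -- bound on the first factor
    have hb1 : betaPDF αcs (α + β) u ≤ 2 * ε / Bcs := by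
      unfold betaPDF
      rw [← hBcs]
      apply div_le_div_of_nonneg_right _ hBcs_pos.le
      have e1 : u ^ (αcs - 1) ≤ 1 :=
        Real.rpow_le_one (by linarith) (by linarith) (by linarith)
      have e2 : (1 - u) ^ (α + β - 1) ≤ 2 * ε := by
        have h2e : 1 - u ≤ 2 * ε := by linarith
        have h2e1 : 1 - u ≤ 1 := by linarith
        calc (1 - u) ^ (α + β - 1) ≤ (1 - u) ^ (1 : ℝ) :=
              Real.rpow_le_rpow_of_exponent_ge h1u h2e1 (by linarith)
          _ = 1 - u := Real.rpow_one _
          _ ≤ 2 * ε := h2e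
      calc u ^ (αcs - 1) * (1 - u) ^ (α + β - 1)
          ≤ 1 * (2 * ε) :=
            mul_le_mul e1 e2 (Real.rpow_nonneg (by linarith) _) zero_le_one
        _ = 2 * ε := one_mul _
    -- bound on the middle factor
    have hb2 : betaPDF α β (xiStd (1 - ε) u) + betaPDF α β (1 - xiStd (1 - ε) u) ≤ 2 / Bab := by
      have e1 := betaPDF_le hα hβ hx0 hx1
      have e2 := betaPDF_le hα hβ (x := 1 - xiStd (1 - ε) u) (by linarith) (by linarith)
      rw [← hBab] at e1 e2
      calc betaPDF α β (xiStd (1 - ε) u) + betaPDF α β (1 - xiStd (1 - ε) u)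
          ≤ 1 / Bab + 1 / Bab := add_le_add e1 e2
        _ = 2 / Bab := by ring
    -- bound on the last factor
    have hb3 : dxiStd (1 - ε) u ≤
        (1 / (2 * Real.sqrt ε)) * (u - (1 - 2 * ε)) ^ (-(1 / 2) : ℝ) := by
      have hrw : (1 - u) * ((1 - (1 - ε)) + (u - (1 - ε))) = (1 - u) * (u - (1 - 2 * ε)) := by
        ring
      have hprod : ε * (u - (1 - 2 * ε)) ≤ (1 - u) * (u - (1 - 2 * ε)) :=
        mul_le_mul_of_nonneg_right (by linarith) huc.le
      have hs1 : Real.sqrt ε * Real.sqrt (u - (1 - 2 * ε)) ≤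
          Real.sqrt ((1 - u) * (u - (1 - 2 * ε))) := by
        rw [← Real.sqrt_mul hε0.le]
        exact Real.sqrt_le_sqrt hprod
      have hs2 : 0 < Real.sqrt ε * Real.sqrt (u - (1 - 2 * ε)) :=
        mul_pos hsε (Real.sqrt_pos.mpr huc)
      have key : dxiStd (1 - ε) u ≤ 1 / (2 * (Real.sqrt ε * Real.sqrt (u - (1 - 2 * ε)))) := by
        unfold dxiStd
        rw [hrw]
        apply one_div_le_one_div_of_le (by linarith) (by linarith)
      have hrp : (u - (1 - 2 * ε)) ^ (-(1 / 2) : ℝ) = 1 / Real.sqrt (u - (1 - 2 * ε)) := by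
        rw [Real.rpow_neg huc.le, ← Real.sqrt_eq_rpow, one_div]
      rw [hrp]
      refine key.trans_eq ?_
      have h2 : Real.sqrt (u - (1 - 2 * ε)) ≠ 0 := (Real.sqrt_pos.mpr huc).ne'
      field_simp
    -- combine
    have hnn1 : 0 ≤ betaPDF αcs (α + β) u :=
      betaPDF_nonneg (by linarith) (by linarith) (by linarith) (by linarith)
    have hnn2 : 0 ≤ betaPDF α β (xiStd (1 - ε) u) + betaPDF α β (1 - xiStd (1 - ε) u) :=
      add_nonneg (betaPDF_nonneg (by linarith) (by linarith) hx0 hx1)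
        (betaPDF_nonneg (by linarith) (by linarith) (by linarith) (by linarith))
    have hnn3 : 0 ≤ dxiStd (1 - ε) u := by unfold dxiStd; positivity
    have hnnb1 : 0 ≤ 2 * ε / Bcs := by positivity
    have hnnb2 : 0 ≤ 2 / Bab := by positivity
    exact mul_le_mul (mul_le_mul hb1 hb2 hnn2 hnnb1) hb3 hnn3 (mul_nonneg hnnb1 hnnb2)
  -- integrability of the dominating function
  have hIbase : IntervalIntegrable (fun u : ℝ => (u - (1 - 2 * ε)) ^ (-(1 / 2) : ℝ))
      MeasureTheory.volume (1 - 2 * ε) (1 - ε) := by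
    have h := (intervalIntegral.intervalIntegrable_rpow' (a := 0) (b := ε)
      (r := -(1 / 2)) (by norm_num)).comp_sub_right (1 - 2 * ε)
    have e1 : (0 : ℝ) + (1 - 2 * ε) = 1 - 2 * ε := by ring
    have e2 : ε + (1 - 2 * ε) = 1 - ε := by ring
    rwa [e1, e2] at h
  have hIg : IntervalIntegrable
      (fun u : ℝ => (2 * ε / Bcs) * (2 / Bab) *
        ((1 / (2 * Real.sqrt ε)) * (u - (1 - 2 * ε)) ^ (-(1 / 2) : ℝ)))
      MeasureTheory.volume (1 - 2 * ε) (1 - ε) := by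
    have := (hIbase.const_mul (1 / (2 * Real.sqrt ε))).const_mul ((2 * ε / Bcs) * (2 / Bab))
    simpa [mul_assoc] using this
  -- value of the dominating integral
  have hint : ∫ u in (1 - 2 * ε)..(1 - ε), (u - (1 - 2 * ε)) ^ (-(1 / 2) : ℝ) =
      2 * Real.sqrt ε := by
    rw [intervalIntegral.integral_comp_sub_right (fun x => x ^ (-(1 / 2) : ℝ)) (1 - 2 * ε)]
    have e1 : (1 - 2 * ε) - (1 - 2 * ε) = 0 := by ring
    have e2 : (1 - ε) - (1 - 2 * ε) = ε := by ring
    rw [e1, e2, integral_rpow (Or.inl (by norm_num))]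
    have : (0 : ℝ) ^ (-(1 / 2) + 1 : ℝ) = 0 := Real.zero_rpow (by norm_num)
    rw [this]
    rw [Real.sqrt_eq_rpow]
    norm_num
    ring
  constructor
  · unfold ambPosterior
    rw [hmax]
    exact intervalIntegral.integral_nonneg hca hnn
  · unfold ambPosterior
    rw [hmax]
    have hle : (∫ u in (1 - 2 * ε)..(1 - ε),
        betaPDF αcs (α + β) u *
          (betaPDF α β (xiStd (1 - ε) u) + betaPDF α β (1 - xiStd (1 - ε) u)) *
            dxiStd (1 - ε) u) ≤
        ∫ u in (1 - 2 * ε)..(1 - ε),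
          (2 * ε / Bcs) * (2 / Bab) *
            ((1 / (2 * Real.sqrt ε)) * (u - (1 - 2 * ε)) ^ (-(1 / 2) : ℝ)) := by
      rw [intervalIntegral.integral_of_le hca, intervalIntegral.integral_of_le hca]
      apply MeasureTheory.integral_mono_of_nonneg
      · exact (MeasureTheory.ae_restrict_iff' measurableSet_Ioc).mpr
          (Filter.Eventually.of_forall fun u hu => hnn u (Set.Ioc_subset_Icc_self hu))
      · exact hIg.1
      · exact (MeasureTheory.ae_restrict_iff' measurableSet_Ioc).mpr
          (Filter.Eventually.of_forall fun u hu => hdom u hu)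
    refine hle.trans ?_
    have hval : ∫ u in (1 - 2 * ε)..(1 - ε),
        (2 * ε / Bcs) * (2 / Bab) *
          ((1 / (2 * Real.sqrt ε)) * (u - (1 - 2 * ε)) ^ (-(1 / 2) : ℝ)) =
        (2 * ε / Bcs) * (2 / Bab) * ((1 / (2 * Real.sqrt ε)) * (2 * Real.sqrt ε)) := by
      rw [intervalIntegral.integral_const_mul]
      rw [intervalIntegral.integral_const_mul]
      rw [hint]
    rw [hval]
    have h1 : (1 / (2 * Real.sqrt ε)) * (2 * Real.sqrt ε) = 1 := by
      field_simp
    rw [h1, mul_one]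
    apply le_of_eq
    field_simp
    ring

/-- For parameters `α, β, α_cs ≥ 1`, the posterior density of the standard ambiguity
satisfies `P(1-ε) ≤ 2K√ε` for some constant `K` and all sufficiently small `ε > 0`;
in particular `P(a) → 0` as `a → 1⁻`. -/
theorem ambPosterior_vanishes_at_one
    (α β αcs : ℝ) (hα : 1 ≤ α) (hβ : 1 ≤ β) (hαcs : 1 ≤ αcs) :
    (∃ K : ℝ, ∀ᶠ ε in 𝓝[>] (0 : ℝ),
        ambPosterior α β αcs (1 - ε) ≤ 2 * K * Real.sqrt ε)
    ∧ Tendsto (ambPosterior α β αcs) (𝓝[<] (1 : ℝ)) (𝓝 0) := by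
  set Bcs : ℝ := Real.Gamma αcs * Real.Gamma (α + β) / Real.Gamma (αcs + (α + β)) with hBcs
  set Bab : ℝ := Real.Gamma α * Real.Gamma β / Real.Gamma (α + β) with hBab
  have hBcs_pos : 0 < Bcs :=
    div_pos (mul_pos (Real.Gamma_pos_of_pos (by linarith)) (Real.Gamma_pos_of_pos (by linarith)))
      (Real.Gamma_pos_of_pos (by linarith))
  have hBab_pos : 0 < Bab :=
    div_pos (mul_pos (Real.Gamma_pos_of_pos (by linarith)) (Real.Gamma_pos_of_pos (by linarith)))
      (Real.Gamma_pos_of_pos (by linarith))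
  set K : ℝ := 2 / (Bcs * Bab) with hK
  have hK_pos : 0 < K := by positivity
  -- the quantitative bound, restated with K
  have key : ∀ ε : ℝ, 0 < ε → ε < 1 / 2 →
      ambPosterior α β αcs (1 - ε) ≤ 2 * K * Real.sqrt ε := by
    intro ε hε0 hε2
    have h := (ambPosterior_key α β αcs hα hβ hαcs hε0 hε2).2
    rw [← hBcs, ← hBab] at h
    have heq : 4 * ε / (Bcs * Bab) = 2 * K * ε := by rw [hK]; ring
    rw [heq] at h
    refine h.trans ?_
    have hεs : ε ≤ Real.sqrt ε := by
      nlinarith [Real.sq_sqrt hε0.le, Real.sqrt_nonneg ε, sq_nonneg (Real.sqrt ε - 1)]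
    exact mul_le_mul_of_nonneg_left hεs (by positivity)
  constructor
  · refine ⟨K, ?_⟩
    filter_upwards [Ioo_mem_nhdsGT_of_mem (Set.left_mem_Ico.mpr (by norm_num : (0:ℝ) < 1/2))]
      with ε hε
    exact key ε hε.1 hε.2
  · apply squeeze_zero' (g := fun a => 2 * K * Real.sqrt (1 - a))
    · filter_upwards [Ioo_mem_nhdsLT_of_mem (Set.right_mem_Ioc.mpr (by norm_num : (1/2:ℝ) < 1))]
        with a ha
      have hε0 : 0 < 1 - a := by linarith [ha.2]
      have hε2 : 1 - a < 1 / 2 := by linarith [ha.1]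
      have h := (ambPosterior_key α β αcs hα hβ hαcs hε0 hε2).1
      have e : 1 - (1 - a) = a := by ring
      rwa [e] at h
    · filter_upwards [Ioo_mem_nhdsLT_of_mem (Set.right_mem_Ioc.mpr (by norm_num : (1/2:ℝ) < 1))]
        with a ha
      have hε0 : 0 < 1 - a := by linarith [ha.2]
      have hε2 : 1 - a < 1 / 2 := by linarith [ha.1]
      have h := key (1 - a) hε0 hε2
      have e : 1 - (1 - a) = a := by ring
      rwa [e] at h
    · have hc : Continuous fun a : ℝ => 2 * K * Real.sqrt (1 - a) :=
        continuous_const.mul (Real.continuous_sqrt.comp (continuous_const.sub continuous_id))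
      have h2 : Tendsto (fun a : ℝ => 2 * K * Real.sqrt (1 - a)) (𝓝[<] (1:ℝ)) (𝓝 (2 * K * Real.sqrt (1 - 1))) :=
        (hc.tendsto 1).mono_left nhdsWithin_le_nhds
      simpa using h2
end
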